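/- arXiv:1706.04400 — 7 statements merged into one kernel-verified Lean document; each statement's English description precedes it below -/
import Mathlib

section
/- For each natural number n, there exist metric spaces X and Y, each homeomorphic to the Cantor space {0,1}^ℕ, and a continuous surjection F : X → Y such that F is isometrically containing for the class 𝒟_n of non-expanding surjections between metric spaces having at most n points and diameter at most 1; that is, for every pair of metric spaces K, L with at most n points each and diameter ≤ 1 and every surjective 1-Lipschitz map g : K → L, there exist isometric embeddings i : K → X and j : L → Y with F ∘ i = j ∘ g. -/
/-!
A finite metric space `L` with at most `n` points and diameter at most `1` embeds isometrically
in `ℓ^∞(Fin (n + 1))` by `y ↦ (dist y (σ k))ₖ` for a surjection `σ : Fin (n + 1) → L`. Each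
coordinate is then lifted to a Cantor set: sequences of signed binary digits, with digit `m`
weighted by `κ / 2 ^ m`, carry the metric `max |decode s - decode t| ((1/2) ^ firstDiff s t)`.
To lift at most `n` reals isometrically, expand them greedily, steering at level `m` not towards
the value itself but towards a representative of its cluster at scale `2⁻ᵐ`: values in one
cluster then share their first `m + 1` digits, while values in different clusters are more than
`2⁻ᵐ` apart. With `Y` the `Fin (n + 1)`-fold power of this Cantor set, `X = Y × Y` and `F` the
second projection, a `1`-Lipschitz `g : K → L` is realised by `x ↦ (e_K x, e_L (g x))` and `e_L`.
-/

open Set Filter Topology MeasureTheory Metric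

noncomputable section

namespace SignedBinary

/-- A signed binary digit in `{-1, 0, 1}`, stored as two bits so that digit sequences form a
Cantor space. -/
def digitVal (d : Bool → Bool) : ℝ := (if d true then 1 else 0) - (if d false then 1 else 0)

theorem abs_digitVal_le (d : Bool → Bool) : |digitVal d| ≤ 1 := by
  unfold digitVal
  split_ifs <;> norm_num

def digit (x w : ℝ) (b : Bool) : Bool :=
  if b then decide (w / 2 < x) else decide (x < -(w / 2))

theorem abs_sub_digitVal_digit_le {x w : ℝ} (hx : |x| ≤ 3 * w / 2) :
    |x - digitVal (digit x w) * w| ≤ w / 2 := by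
  rw [abs_le] at hx ⊢
  by_cases hpos : w / 2 < x
  · have hneg : ¬ x < -(w / 2) := by linarith
    simp only [digitVal, digit, hpos, hneg, decide_true, decide_false]
    constructor <;> norm_num <;> linarith
  · by_cases hneg : x < -(w / 2) <;>
      simp only [digitVal, digit, hpos, hneg, decide_true, decide_false] <;>
      constructor <;> norm_num <;> linarith

def decode (κ : ℝ) (s : ℕ → Bool → Bool) : ℝ := ∑' m, digitVal (s m) * (κ * (1 / 2) ^ m)

theorem norm_digitVal_mul_le (κ : ℝ) (d : Bool → Bool) (m : ℕ) :
    ‖digitVal d * (κ * (1 / 2) ^ m)‖ ≤ |κ| * (1 / 2) ^ m := by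
  rw [Real.norm_eq_abs, abs_mul, abs_mul, abs_of_pos (by positivity : (0 : ℝ) < (1 / 2) ^ m)]
  exact mul_le_of_le_one_left (by positivity) (abs_digitVal_le d)

theorem summable_decode (κ : ℝ) (s : ℕ → Bool → Bool) :
    Summable fun m => digitVal (s m) * (κ * (1 / 2) ^ m) :=
  .of_norm_bounded (summable_geometric_two.mul_left |κ|) fun m => norm_digitVal_mul_le κ (s m) m

theorem continuous_decode (κ : ℝ) : Continuous (decode κ) :=
  continuous_tsum (fun m => ((continuous_of_discreteTopology (f := digitVal)).comp
    (continuous_apply m)).mul continuous_const) (summable_geometric_two.mul_left |κ|)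
    fun m s => norm_digitVal_mul_le κ (s m) m

def greedySum (κ : ℝ) (t : ℕ → ℝ) : ℕ → ℝ
  | 0 => 0
  | m + 1 => greedySum κ t m +
      digitVal (digit (t m - greedySum κ t m) (κ * (1 / 2) ^ m)) * (κ * (1 / 2) ^ m)

def greedyDigits (κ : ℝ) (t : ℕ → ℝ) (m : ℕ) : Bool → Bool :=
  digit (t m - greedySum κ t m) (κ * (1 / 2) ^ m)

variable {κ : ℝ} {t t' : ℕ → ℝ}

theorem greedySum_succ (m : ℕ) :
    greedySum κ t (m + 1) = greedySum κ t m + digitVal (greedyDigits κ t m) * (κ * (1 / 2) ^ m) :=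
  rfl

theorem greedySum_eq_sum (m : ℕ) :
    greedySum κ t m = ∑ k ∈ Finset.range m, digitVal (greedyDigits κ t k) * (κ * (1 / 2) ^ k) := by
  induction m with
  | zero => rfl
  | succ m ih => rw [greedySum_succ, ih, Finset.sum_range_succ]

theorem abs_sub_greedySum_le (h₀ : |t 0| ≤ 3 * κ / 2)
    (hstep : ∀ m, |t (m + 1) - t m| ≤ κ * (1 / 2) ^ m / 4) (m : ℕ) :
    |t m - greedySum κ t m| ≤ 3 * (κ * (1 / 2) ^ m) / 2 := by
  induction m with
  | zero => simpa [greedySum] using h₀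
  | succ m ih =>
    calc |t (m + 1) - greedySum κ t (m + 1)|
        = |(t m - greedySum κ t m - digitVal (greedyDigits κ t m) * (κ * (1 / 2) ^ m)) +
            (t (m + 1) - t m)| := by rw [greedySum_succ]; ring_nf
      _ ≤ κ * (1 / 2) ^ m / 2 + κ * (1 / 2) ^ m / 4 :=
        (abs_add_le _ _).trans (add_le_add (abs_sub_digitVal_digit_le ih) (hstep m))
      _ = 3 * (κ * (1 / 2) ^ (m + 1)) / 2 := by ring

theorem decode_greedyDigits {v : ℝ} (h₀ : |t 0| ≤ 3 * κ / 2)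
    (hstep : ∀ m, |t (m + 1) - t m| ≤ κ * (1 / 2) ^ m / 4) (ht : Tendsto t atTop (𝓝 v)) :
    decode κ (greedyDigits κ t) = v := by
  have herr : Tendsto (fun m => t m - greedySum κ t m) atTop (𝓝 0) := by
    refine squeeze_zero_norm (abs_sub_greedySum_le h₀ hstep) ?_
    simpa using (((tendsto_pow_atTop_nhds_zero_of_lt_one (r := (1 / 2 : ℝ)) (by norm_num)
      (by norm_num)).const_mul κ).const_mul 3).div_const 2
  have hsum : Tendsto (greedySum κ t) atTop (𝓝 v) := by simpa using ht.sub herr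
  refine ((summable_decode κ _).hasSum_iff_tendsto_nat.2 ?_).tsum_eq
  simpa only [← greedySum_eq_sum] using hsum

theorem greedySum_congr {m : ℕ} (h : ∀ k < m, t k = t' k) :
    greedySum κ t m = greedySum κ t' m := by
  induction m with
  | zero => rfl
  | succ m ih => rw [greedySum, greedySum, ih fun k hk => h k (by omega), h m (by omega)]

theorem greedyDigits_congr {m : ℕ} (h : ∀ k ≤ m, t k = t' k) :
    greedyDigits κ t m = greedyDigits κ t' m := by
  rw [greedyDigits, greedyDigits, h m le_rfl, greedySum_congr fun k hk => h k hk.le]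

end SignedBinary

section Cluster

variable {ι : Type*} (f : ι → ℝ)

/-- Chain-connectedness of `f i` and `f j` through values of `f` with gaps at most
`2 * (1/2) ^ m`, phrased as a covering so that transitivity is immediate. -/
def Clustered (m : ℕ) (i j : ι) : Prop :=
  uIcc (f i) (f j) ⊆ ⋃ k, closedBall (f k) ((1 / 2) ^ m)

variable {f}

theorem clustered_of_abs_sub_le {m : ℕ} {i j : ι} (h : |f i - f j| ≤ (1 / 2) ^ m) :
    Clustered f m i j := fun x hx =>
  mem_iUnion.2 ⟨i, by
    rw [mem_closedBall, Real.dist_eq]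
    exact (abs_sub_left_of_mem_uIcc hx).trans (by rwa [abs_sub_comm])⟩

theorem Clustered.mono {m n : ℕ} {i j : ι} (hmn : m ≤ n) (h : Clustered f n i j) :
    Clustered f m i j :=
  h.trans <| iUnion_mono fun _ => closedBall_subset_closedBall <|
    pow_le_pow_of_le_one (by norm_num) (by norm_num) hmn

theorem Clustered.abs_sub_le [Finite ι] {m : ℕ} {i j : ι} (h : Clustered f m i j) :
    |f i - f j| ≤ 2 * Nat.card ι * (1 / 2) ^ m := by
  have := Fintype.ofFinite ι
  have hvol : ENNReal.ofReal |f j - f i| ≤ ENNReal.ofReal (2 * Nat.card ι * (1 / 2) ^ m) :=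
    calc ENNReal.ofReal |f j - f i| = volume (uIcc (f i) (f j)) := Real.volume_interval.symm
      _ ≤ volume (⋃ k, closedBall (f k) ((1 / 2) ^ m)) := measure_mono h
      _ ≤ ∑ k, volume (closedBall (f k) ((1 / 2) ^ m)) := measure_iUnion_fintype_le _ _
      _ = ENNReal.ofReal (2 * Nat.card ι * (1 / 2) ^ m) := by
        rw [Finset.sum_congr rfl fun k _ => Real.volume_closedBall _ _, Finset.sum_const,
          Finset.card_univ, nsmul_eq_mul, ← ENNReal.ofReal_natCast,
          ← ENNReal.ofReal_mul (by positivity), Nat.card_eq_fintype_card]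
        ring_nf
  rwa [ENNReal.ofReal_le_ofReal_iff (by positivity), abs_sub_comm] at hvol

variable (f) in
def clusterSetoid (m : ℕ) : Setoid ι where
  r := Clustered f m
  iseqv :=
    { refl := fun i => clustered_of_abs_sub_le (by simp)
      symm := fun h => by rwa [Clustered, uIcc_comm]
      trans := fun h₁ h₂ => uIcc_subset_uIcc_union_uIcc.trans (union_subset h₁ h₂) }

variable (f) in
def clusterRep (m : ℕ) (i : ι) : ℝ := f (Quotient.mk (clusterSetoid f m) i).out

theorem clusterRep_eq {m : ℕ} {i j : ι} (h : Clustered f m i j) :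
    clusterRep f m i = clusterRep f m j := by
  rw [clusterRep, clusterRep, @Quotient.sound _ (clusterSetoid f m) _ _ h]

theorem clustered_out (m : ℕ) (i : ι) :
    Clustered f m (Quotient.mk (clusterSetoid f m) i).out i :=
  Quotient.mk_out (s := clusterSetoid f m) i

theorem abs_clusterRep_sub_le [Finite ι] (m : ℕ) (i : ι) :
    |clusterRep f m i - f i| ≤ 2 * Nat.card ι * (1 / 2) ^ m :=
  (clustered_out m i).abs_sub_le

theorem abs_clusterRep_succ_sub_le [Finite ι] (m : ℕ) (i : ι) :
    |clusterRep f (m + 1) i - clusterRep f m i| ≤ 2 * Nat.card ι * (1 / 2) ^ m :=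
  Clustered.abs_sub_le <| (clusterSetoid f m).trans ((clustered_out (m + 1) i).mono m.le_succ)
    ((clusterSetoid f m).symm (clustered_out m i))

end Cluster

section PiNatMetric

/- Here `ℕ → Bool → Bool` carries the ultrametric `(1/2) ^ firstDiff x y`. -/
attribute [local instance] PiNat.metricSpace

theorem PiNat.dist_le_of_apply_ne {E : ℕ → Type*} [∀ n, TopologicalSpace (E n)]
    [∀ n, DiscreteTopology (E n)] {x y : ∀ n, E n} {δ : ℝ} (hδ : 0 ≤ δ)
    (h : ∀ m, x m ≠ y m → (1 / 2) ^ m ≤ δ) : dist x y ≤ δ := by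
  rcases eq_or_ne x y with rfl | hne
  · rwa [dist_self]
  · rw [PiNat.dist_eq_of_ne hne]
    exact h _ (PiNat.apply_firstDiff_ne hne)

structure DecodingGraph (κ : ℝ) where
  digits : ℕ → Bool → Bool

namespace DecodingGraph

variable {κ : ℝ}

def toProd (κ : ℝ) (s : DecodingGraph κ) : ℝ × (ℕ → Bool → Bool) :=
  (SignedBinary.decode κ s.digits, s.digits)

theorem toProd_injective : Function.Injective (toProd κ) := fun s t h => by
  cases s; cases t; simpa [toProd] using congrArg Prod.snd h

instance : MetricSpace (DecodingGraph κ) :=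
  MetricSpace.induced (toProd κ) toProd_injective inferInstance

instance : Inhabited (DecodingGraph κ) := ⟨⟨fun _ _ => false⟩⟩

theorem dist_eq (s t : DecodingGraph κ) :
    dist s t = max (dist (SignedBinary.decode κ s.digits) (SignedBinary.decode κ t.digits))
      (dist s.digits t.digits) :=
  rfl

end DecodingGraph

end PiNatMetric

theorem DecodingGraph.continuous_mk (κ : ℝ) : Continuous (DecodingGraph.mk (κ := κ)) := by
  rw [continuous_induced_rng]
  exact (SignedBinary.continuous_decode κ).prodMk continuous_id

theorem nonempty_homeomorph_nat_bool (J : Type*) [Countable J] [Infinite J] :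
    Nonempty ((J → Bool) ≃ₜ (ℕ → Bool)) :=
  let ⟨e⟩ := nonempty_equiv_of_countable (α := J) (β := ℕ)
  ⟨Homeomorph.piCongrLeft (Y := fun _ => Bool) e⟩

theorem DecodingGraph.nonempty_homeomorph (κ : ℝ) : Nonempty (DecodingGraph κ ≃ₜ (ℕ → Bool)) :=
  let h : DecodingGraph κ ≃ₜ (ℕ → Bool → Bool) := (Continuous.homeoOfEquivCompactToT2
    (f := ⟨DecodingGraph.mk, DecodingGraph.digits, fun _ => rfl, fun _ => rfl⟩)
    (continuous_mk κ)).symm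
  let ⟨h'⟩ := nonempty_homeomorph_nat_bool (ℕ × Bool)
  ⟨(h.trans Homeomorph.piCurry.symm).trans h'⟩

theorem nonempty_homeomorph_pi {C : Type*} [TopologicalSpace C] (ι : Type*) [Countable ι]
    [Nonempty ι] (h : C ≃ₜ (ℕ → Bool)) : Nonempty ((ι → C) ≃ₜ (ℕ → Bool)) :=
  let ⟨h'⟩ := nonempty_homeomorph_nat_bool (ι × ℕ)
  ⟨((Homeomorph.piCongrRight fun _ => h).trans Homeomorph.piCurry.symm).trans h'⟩

theorem nonempty_homeomorph_prod {A B : Type*} [TopologicalSpace A] [TopologicalSpace B]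
    (h₁ : A ≃ₜ (ℕ → Bool)) (h₂ : B ≃ₜ (ℕ → Bool)) : Nonempty ((A × B) ≃ₜ (ℕ → Bool)) :=
  let ⟨h⟩ := nonempty_homeomorph_nat_bool (ℕ ⊕ ℕ)
  ⟨((h₁.prodCongr h₂).trans Homeomorph.sumArrowHomeomorphProdArrow.symm).trans h⟩

open SignedBinary in
theorem exists_isometry_decodingGraph {ι : Type*} [Finite ι] {κ : ℝ} (f : ι → ℝ)
    (hf : ∀ i, |f i| ≤ κ) (hκ : 8 * (Nat.card ι : ℝ) ≤ κ) :
    ∃ c : ι → DecodingGraph κ, ∀ i j, dist (c i) (c j) = dist (f i) (f j) := by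
  set t : ι → ℕ → ℝ := fun i m => clusterRep f m i
  -- consecutive targets lie in one cluster, of diameter at most a quarter of the digit weight
  have hstep : ∀ i m, |t i (m + 1) - t i m| ≤ κ * (1 / 2) ^ m / 4 := fun i m =>
    (abs_clusterRep_succ_sub_le m i).trans
      (by nlinarith [pow_pos (by norm_num : (0 : ℝ) < 1 / 2) m])
  have h₀ : ∀ i, |t i 0| ≤ 3 * κ / 2 := fun i =>
    (hf _).trans (by linarith [(abs_nonneg (f i)).trans (hf i)])
  have hlim : ∀ i, Tendsto (t i) atTop (𝓝 (f i)) := fun i =>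
    tendsto_iff_norm_sub_tendsto_zero.2 <| squeeze_zero (fun _ => norm_nonneg _)
      (fun m => abs_clusterRep_sub_le m i) <| by
        simpa using (tendsto_pow_atTop_nhds_zero_of_lt_one (r := (1 / 2 : ℝ)) (by norm_num)
          (by norm_num)).const_mul (2 * Nat.card ι : ℝ)
  have hdecode : ∀ i, decode κ (greedyDigits κ (t i)) = f i := fun i =>
    decode_greedyDigits (h₀ i) (hstep i) (hlim i)
  have hagree : ∀ i j m, Clustered f m i j → greedyDigits κ (t i) m = greedyDigits κ (t j) m :=
    fun i j m h => greedyDigits_congr fun k hk => clusterRep_eq (h.mono hk)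
  refine ⟨fun i => ⟨greedyDigits κ (t i)⟩, fun i j => ?_⟩
  rw [DecodingGraph.dist_eq, hdecode, hdecode, max_eq_left]
  refine PiNat.dist_le_of_apply_ne dist_nonneg fun m hne => ?_
  by_contra hlt
  exact hne (hagree i j m (clustered_of_abs_sub_le (le_of_not_ge hlt)))

theorem exists_isometry_pi_decodingGraph {L ι : Type*} [MetricSpace L] [Finite L] [Fintype ι]
    {κ : ℝ} (hcard : Nat.card L ≤ Nat.card ι) (hdiam : diam (univ : Set L) ≤ 1)
    (hκ : 8 * (Nat.card L : ℝ) ≤ κ) : ∃ e : L → ι → DecodingGraph κ, Isometry e := by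
  cases isEmpty_or_nonempty L
  · exact ⟨isEmptyElim, fun x => isEmptyElim x⟩
  have := Fintype.ofFinite L
  obtain ⟨σ, hσ⟩ : ∃ σ : ι → L, Function.Surjective σ := by
    obtain ⟨e⟩ := Function.Embedding.nonempty_of_card_le (α := L) (β := ι)
      (by simpa only [Nat.card_eq_fintype_card] using hcard)
    have : Nonempty ι := Nonempty.map e ‹_›
    exact ⟨Function.invFun e, Function.invFun_surjective e.injective⟩
  have hκ₁ : 1 ≤ κ := le_trans (by norm_cast; linarith [Nat.card_pos (α := L)]) hκ
  choose c hc using fun k : ι => exists_isometry_decodingGraph (fun y => dist y (σ k))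
    (fun y => by
      rw [abs_of_nonneg dist_nonneg]
      exact (dist_le_diam_of_mem isBounded_of_compactSpace (mem_univ _) (mem_univ _)).trans
        (hdiam.trans hκ₁)) hκ
  refine ⟨fun y k => c k y, Isometry.of_dist_eq fun y y' => le_antisymm ?_ ?_⟩
  · refine (dist_pi_le_iff dist_nonneg).2 fun k => ?_
    rw [hc, Real.dist_eq]
    exact abs_dist_sub_le y y' (σ k)
  · obtain ⟨k, rfl⟩ := hσ y'
    calc dist y (σ k) = dist (c k y) (c k (σ k)) := by simp [hc]
      _ ≤ dist (fun l => c l y) (fun l => c l (σ k)) :=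
        dist_le_pi_dist (fun l => c l y) (fun l => c l (σ k)) k

/-- For each natural number `n`, there exist metric spaces `X` and `Y`, each homeomorphic
to the Cantor space `ℕ → Bool`, and a continuous surjection `F : X → Y` which is
isometrically containing for the class of non-expanding surjections between metric
spaces with at most `n` points and diameter at most `1`. -/
theorem cantor_isometrically_containing (n : ℕ) :
    ∃ (X Y : Type) (_ : MetricSpace X) (_ : MetricSpace Y) (F : X → Y),
      Nonempty (X ≃ₜ (ℕ → Bool)) ∧ Nonempty (Y ≃ₜ (ℕ → Bool)) ∧
      Continuous F ∧ Function.Surjective F ∧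
      ∀ (K L : Type) (_ : MetricSpace K) (_ : MetricSpace L),
        Finite K → Nat.card K ≤ n → Metric.diam (Set.univ : Set K) ≤ 1 →
        Finite L → Nat.card L ≤ n → Metric.diam (Set.univ : Set L) ≤ 1 →
        ∀ g : K → L, Function.Surjective g → LipschitzWith 1 g →
          ∃ (i : K → X) (j : L → Y), Isometry i ∧ Isometry j ∧ F ∘ i = j ∘ g := by
  obtain ⟨hD⟩ := DecodingGraph.nonempty_homeomorph (8 * n)
  obtain ⟨hY⟩ := nonempty_homeomorph_pi (Fin (n + 1)) hD
  refine ⟨(Fin (n + 1) → DecodingGraph (8 * n)) × (Fin (n + 1) → DecodingGraph (8 * n)),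
    Fin (n + 1) → DecodingGraph (8 * n), inferInstance, inferInstance, Prod.snd,
    nonempty_homeomorph_prod hY hY, ⟨hY⟩, continuous_snd, Prod.snd_surjective,
    fun K L _ _ _ hK hKdiam _ hL hLdiam g _ hg => ?_⟩
  obtain ⟨eK, heK⟩ := exists_isometry_pi_decodingGraph (ι := Fin (n + 1)) (κ := 8 * n)
    (by rw [Nat.card_fin]; omega) hKdiam (by gcongr)
  obtain ⟨eL, heL⟩ := exists_isometry_pi_decodingGraph (ι := Fin (n + 1)) (κ := 8 * n)
    (by rw [Nat.card_fin]; omega) hLdiam (by gcongr)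
  refine ⟨fun x => (eK x, eL (g x)), eL, Isometry.of_dist_eq fun x x' => ?_, heL, rfl⟩
  rw [Prod.dist_eq, heK.dist_eq, heL.dist_eq, max_eq_left]
  simpa using hg.dist_le_mul x x'
end
end

section
/- For each natural number n, there exist nonempty compact totally disconnected (zero-dimensional) metric spaces E and H and a continuous surjection f : E → H which is isometrically containing for the class 𝒟_n of non-expanding surjections between metric spaces having at most n points and diameter at most 1. -/
/-!
Every nonempty metric space `K` with at most `m` points and diameter at most `1` is the image of a
surjection `e : Fin m → K`, and `k ↦ (dist k (e j))ⱼ` embeds it isometrically in `Fin m → ℝ`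
with the sup metric, onto the rows of the distance matrix `(dist (e i) (e j))ᵢⱼ ∈ [0,1]^(m × m)`.
Parametrise the cube `[0,1]^(m × m)` by the Cantor space `C` (Hausdorff–Alexandroff) and let `S`
be the set of rows of all these matrices, each tagged with its parameter in `C`: `S` is compact,
and it is totally disconnected because its fibres over `C` are finite. For a non-expanding `g : K → L`,
the map `k ↦ (ι_K k, ι_L (g k))` into `S × S` is an isometry, since the sup metric of the
product takes the larger of the two distances, so the projection `S × S → S` does the job.
-/

open Set Function Metric unitInterval

theorem Isometry.prodMk_of_lipschitzWith_one {X Y Z : Type*} [PseudoEMetricSpace X]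
    [PseudoEMetricSpace Y] [PseudoEMetricSpace Z] {f : X → Y} {g : X → Z} (hf : Isometry f)
    (hg : LipschitzWith 1 g) : Isometry fun x => (f x, g x) := fun x y => by
  rw [Prod.edist_eq, hf x y]
  exact max_eq_left (by simpa using hg.edist_le_mul x y)

theorem isometry_dist_of_surjective {X ι : Type*} [PseudoMetricSpace X] [Fintype ι]
    {e : ι → X} (he : Surjective e) : Isometry fun x i => dist x (e i) := by
  refine Isometry.of_dist_eq fun x y => le_antisymm ?_ ?_
  · exact (dist_pi_le_iff dist_nonneg).2 fun i => abs_dist_sub_le x y (e i)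
  · obtain ⟨i, rfl⟩ := he y
    simpa [Real.dist_eq] using
      dist_le_pi_dist (fun i => dist x (e i)) (fun j => dist (e i) (e j)) i

theorem isTotallyDisconnected_of_finite_fibers {X Z : Type*} [TopologicalSpace X] [T1Space X]
    [TopologicalSpace Z] [TotallyDisconnectedSpace Z] {s : Set X} {f : X → Z}
    (hf : ContinuousOn f s) (hfib : ∀ z, (s ∩ f ⁻¹' {z}).Finite) : IsTotallyDisconnected s := by
  intro t hts ht
  rcases t.eq_empty_or_nonempty with rfl | ⟨x, hx⟩
  · exact subsingleton_empty
  have hconst : (f '' t).Subsingleton := (ht.image f (hf.mono hts)).subsingleton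
  have hfin : t.Finite := (hfib (f x)).subset fun y hy =>
    ⟨hts hy, hconst (mem_image_of_mem f hy) (mem_image_of_mem f hx)⟩
  exact ht.isDiscrete_iff_subsingleton.1 hfin.isDiscrete

section TaggedRows

variable {C : Type*} {m : ℕ} (D : C → Fin m → Fin m → I)

def taggedRows : Set ((Fin m → ℝ) × C) :=
  range fun p : C × Fin m => (fun j => (D p.1 p.2 j : ℝ), p.1)

variable {D}

theorem isCompact_taggedRows [TopologicalSpace C] [CompactSpace C] (hD : Continuous D) :
    IsCompact (taggedRows D) :=
  isCompact_range <| .prodMk (continuous_pi fun j => continuous_subtype_val.comp <|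
    continuous_prod_of_discrete_right.2 fun i => (continuous_apply_apply i j).comp hD)
    continuous_fst

theorem isTotallyDisconnected_taggedRows [TopologicalSpace C] [TotallyDisconnectedSpace C] :
    IsTotallyDisconnected (taggedRows D) := by
  refine isTotallyDisconnected_of_finite_fibers continuous_snd.continuousOn fun c => ?_
  refine (finite_range fun i => ((fun j => (D c i j : ℝ)), c)).subset ?_
  rintro _ ⟨⟨⟨_, i⟩, rfl⟩, rfl⟩
  exact ⟨i, rfl⟩

theorem exists_isometry_taggedRows [PseudoMetricSpace C] (hD : Surjective D) (K : Type*)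
    [PseudoMetricSpace K] [Finite K] (hcard : Nat.card K ≤ m) (hdiam : diam (univ : Set K) ≤ 1) :
    ∃ ι : K → taggedRows D, Isometry ι := by
  rcases isEmpty_or_nonempty K with _ | _
  · exact ⟨isEmptyElim, isometry_subsingleton⟩
  let ψ : K → Fin m := Fin.castLE hcard ∘ Finite.equivFin K
  have hψ : Injective ψ := (Fin.castLE_injective hcard).comp (Finite.equivFin K).injective
  let e : Fin m → K := invFun ψ
  have he : ∀ k, e (ψ k) = k := leftInverse_invFun hψ
  obtain ⟨c, hc⟩ := hD fun i j =>
    ⟨dist (e i) (e j), dist_nonneg,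
      (dist_le_diam_of_mem finite_univ.isBounded (mem_univ _) (mem_univ _)).trans hdiam⟩
  have hrow : ∀ k, ((fun j => dist k (e j)), c) ∈ taggedRows D := fun k =>
    ⟨(c, ψ k), by simp [hc, he]⟩
  have hι : Isometry fun k => ((fun j => dist k (e j)), c) :=
    (isometry_dist_of_surjective (invFun_surjective hψ)).prodMk_of_lipschitzWith_one
      (LipschitzWith.const' c)
  exact ⟨fun k => ⟨_, hrow k⟩, hι⟩

end TaggedRows

/-- For each natural number `n`, there exist nonempty compact totally disconnected
(zero-dimensional) metric spaces `E` and `H` and a continuous surjection `f : E → H`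
which is isometrically containing for the class of non-expanding surjections between
metric spaces with at most `n` points and diameter at most `1`. -/
theorem zeroDim_isometrically_containing (n : ℕ) :
    ∃ (E H : Type) (_ : MetricSpace E) (_ : MetricSpace H) (f : E → H),
      Nonempty E ∧ Nonempty H ∧ CompactSpace E ∧ CompactSpace H ∧
      TotallyDisconnectedSpace E ∧ TotallyDisconnectedSpace H ∧
      Continuous f ∧ Function.Surjective f ∧
      ∀ (K L : Type) (_ : MetricSpace K) (_ : MetricSpace L),
        Finite K → Nat.card K ≤ n → Metric.diam (Set.univ : Set K) ≤ 1 →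
        Finite L → Nat.card L ≤ n → Metric.diam (Set.univ : Set L) ≤ 1 →
        ∀ g : K → L, Function.Surjective g → LipschitzWith 1 g →
          ∃ (i : K → E) (j : L → H), Isometry i ∧ Isometry j ∧ f ∘ i = j ∘ g := by
  let : MetricSpace (ℕ → Bool) := PiNat.metricSpace
  obtain ⟨D, hDc, hDs⟩ :=
    exists_nat_bool_continuous_surjective_of_compact (Fin (n + 1) → Fin (n + 1) → I)
  let S := taggedRows D
  have : Nonempty S := (range_nonempty _).to_subtype
  have : CompactSpace S := isCompact_iff_compactSpace.1 (isCompact_taggedRows hDc)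
  have : TotallyDisconnectedSpace S :=
    totallyDisconnectedSpace_subtype_iff.2 isTotallyDisconnected_taggedRows
  refine ⟨S × S, S, inferInstance, inferInstance, Prod.snd, inferInstance, inferInstance,
    inferInstance, inferInstance, inferInstance, inferInstance, continuous_snd,
    fun y => ⟨(y, y), rfl⟩, ?_⟩
  intro K L _ _ _ hKcard hKdiam _ hLcard hLdiam g _ hg
  obtain ⟨ιK, hιK⟩ := exists_isometry_taggedRows hDs K (hKcard.trans n.le_succ) hKdiam
  obtain ⟨ιL, hιL⟩ := exists_isometry_taggedRows hDs L (hLcard.trans n.le_succ) hLdiam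
  exact ⟨_, ιL, hιK.prodMk_of_lipschitzWith_one ((hιL.lipschitz.comp hg).weaken (mul_one 1).le),
    hιL, rfl⟩
end

section
/- For each natural number n, there exists a metric space C homeomorphic to the Cantor space {0,1}^ℕ such that every metric space with at most n points and diameter at most 1 admits an isometric embedding into C. -/
/-!
Write `w m = (3/4)^m`. A bit sequence encodes the real `∑ ±w m`. Because `3/4 > 1/2`, choosing
each sign greedily towards a target that moves by at most `w m / 4` at step `m`
keeps the partial sums within `3 w m` of the target, so the bits encode its limit.

Given `K` with at most `n` points, pick `π : Fin (n+1) → K` onto; `a ↦ (dist a (π k))_k` is an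
isometry into the sup metric. Coordinate `k` of `a` is encoded greedily with target at step `m`
the distance from `π k` to a fixed representative of the `ε_m`-chain component of `a`, where
`ε_m = w m / (4(n+1))`. Chains have fewer than `n` links, so the target drifts slowly enough, and
points with `d(a,b) ≤ ε_i` for all `i < m` get the same bits below level `m`. Adjoining the
Cantor-set coordinates of the bit sequences, scaled by `1/(4(n+1))`, makes the encoding injective
(so its image `C` is a Cantor set), and on encoded points of `K` they differ by at most
`3^{-m}/(4(n+1)) ≤ ε_m < d(a,b)`, so they do not change distances.
-/

open Filter Topology Function

noncomputable section

namespace CantorUniversal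

def signedTerm (s : ℕ → Bool) (m : ℕ) : ℝ := cond (s m) ((3 / 4) ^ m) (-(3 / 4) ^ m)

def signedValue (s : ℕ → Bool) : ℝ := ∑' m, signedTerm s m

lemma abs_signedTerm (s : ℕ → Bool) (m : ℕ) : |signedTerm s m| = (3 / 4) ^ m := by
  cases h : s m <;> simp [signedTerm, h, abs_of_pos]

lemma summable_geometric_three_quarters : Summable fun m : ℕ => (3 / 4 : ℝ) ^ m :=
  summable_geometric_of_lt_one (by norm_num) (by norm_num)

lemma summable_signedTerm (s : ℕ → Bool) : Summable (signedTerm s) :=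
  .of_norm_bounded summable_geometric_three_quarters fun m => (abs_signedTerm s m).le

lemma continuous_signedValue : Continuous signedValue :=
  continuous_tsum (fun m => (continuous_of_discreteTopology
      (f := fun b : Bool => cond b ((3 / 4 : ℝ) ^ m) (-(3 / 4) ^ m))).comp (continuous_apply m))
    summable_geometric_three_quarters fun m s => (abs_signedTerm s m).le

def greedyPartial (t : ℕ → ℝ) : ℕ → ℝ
  | 0 => 0
  | m + 1 => greedyPartial t m + if greedyPartial t m < t m then (3 / 4) ^ m else -(3 / 4) ^ m

def greedyBits (t : ℕ → ℝ) (m : ℕ) : Bool := decide (greedyPartial t m < t m)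

lemma sum_signedTerm_greedyBits (t : ℕ → ℝ) (m : ℕ) :
    ∑ i ∈ Finset.range m, signedTerm (greedyBits t) i = greedyPartial t m := by
  induction m with
  | zero => rfl
  | succ m ih =>
    rw [Finset.sum_range_succ, ih, greedyPartial, signedTerm, greedyBits, Bool.cond_decide]

lemma abs_greedyPartial_sub_le {t : ℕ → ℝ} (h₀ : |t 0| ≤ 3)
    (hstep : ∀ m, |t (m + 1) - t m| ≤ (3 / 4) ^ m / 4) (m : ℕ) :
    |greedyPartial t m - t m| ≤ 3 * (3 / 4) ^ m := by
  induction m with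
  | zero => simpa [greedyPartial] using h₀
  | succ m ih =>
    have hw : (0 : ℝ) < (3 / 4) ^ m := by positivity
    have hs := abs_le.mp (hstep m)
    rw [abs_le] at ih ⊢
    rw [greedyPartial, pow_succ]
    split_ifs <;> constructor <;> linarith

lemma hasSum_signedTerm_greedyBits {t : ℕ → ℝ} {L : ℝ} (h₀ : |t 0| ≤ 3)
    (hstep : ∀ m, |t (m + 1) - t m| ≤ (3 / 4) ^ m / 4) (hlim : Tendsto t atTop (𝓝 L)) :
    HasSum (signedTerm (greedyBits t)) L := by
  rw [(summable_signedTerm _).hasSum_iff_tendsto_nat]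
  simp only [sum_signedTerm_greedyBits]
  have hgap : Tendsto (fun m => greedyPartial t m - t m) atTop (𝓝 0) := by
    refine squeeze_zero_norm (abs_greedyPartial_sub_le h₀ hstep) ?_
    simpa using (tendsto_pow_atTop_nhds_zero_of_lt_one (by norm_num : (0 : ℝ) ≤ 3 / 4)
      (by norm_num)).const_mul 3
  simpa using hgap.add hlim

lemma greedyPartial_eq_of_eqOn {t t' : ℕ → ℝ} {m : ℕ} (h : ∀ i < m, t i = t' i) :
    greedyPartial t m = greedyPartial t' m := by
  induction m with
  | zero => rfl
  | succ m ih =>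
    rw [greedyPartial, greedyPartial, ih fun i hi => h i (by omega), h m m.lt_succ_self]

lemma greedyBits_eq_of_eqOn {t t' : ℕ → ℝ} {m : ℕ} (h : ∀ i < m, t i = t' i) :
    ∀ i < m, greedyBits t i = greedyBits t' i := fun i hi => by
  rw [greedyBits, greedyBits, greedyPartial_eq_of_eqOn fun j hj => h j (hj.trans hi), h i hi]

def cantorCode (s : ℕ → Bool) : ℝ := cantorSetHomeomorphNatToBool.symm s

lemma continuous_cantorCode : Continuous cantorCode :=
  continuous_subtype_val.comp cantorSetHomeomorphNatToBool.symm.continuous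

lemma cantorCode_injective : Injective cantorCode :=
  Subtype.val_injective.comp cantorSetHomeomorphNatToBool.symm.injective

lemma abs_cantorCode_sub_le {s s' : ℕ → Bool} {m : ℕ} (h : ∀ i < m, s i = s' i) :
    |cantorCode s - cantorCode s'| ≤ (1 / 3) ^ m := by
  rw [one_div, inv_pow]
  exact_mod_cast Real.abs_ofDigits_sub_ofDigits_le (b := 3) fun i hi => by rw [h i hi]

section Proximity

variable {K : Type*} [PseudoMetricSpace K] {ε : ℝ} {a b : K}

def proximityGraph (K : Type*) [PseudoMetricSpace K] (ε : ℝ) : SimpleGraph K where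
  Adj a b := a ≠ b ∧ dist a b ≤ ε
  symm := ⟨fun a b h => ⟨h.1.symm, dist_comm a b ▸ h.2⟩⟩
  loopless := ⟨fun _ h => h.1 rfl⟩

lemma proximityGraph_adj : (proximityGraph K ε).Adj a b ↔ a ≠ b ∧ dist a b ≤ ε := Iff.rfl

lemma proximityGraph_mono : Monotone (proximityGraph K) :=
  fun _ _ h _ _ hab => proximityGraph_adj.mpr ⟨hab.1, hab.2.trans h⟩

lemma reachable_proximityGraph_of_dist_le (h : dist a b ≤ ε) :
    (proximityGraph K ε).Reachable a b := by
  obtain rfl | hab := eq_or_ne a b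
  · rfl
  · exact SimpleGraph.Adj.reachable (proximityGraph_adj.mpr ⟨hab, h⟩)

lemma dist_le_length_mul (p : (proximityGraph K ε).Walk a b) :
    dist a b ≤ p.length * ε := by
  induction p with
  | nil => simp
  | cons hadj p ih =>
    rw [SimpleGraph.Walk.length_cons, Nat.cast_succ, add_mul, one_mul, add_comm]
    exact (dist_triangle _ _ _).trans (add_le_add (proximityGraph_adj.mp hadj).2 ih)

lemma dist_le_of_reachable [Finite K] (hε : 0 ≤ ε) (h : (proximityGraph K ε).Reachable a b) :
    dist a b ≤ Nat.card K * ε := by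
  classical
  have := Fintype.ofFinite K
  obtain ⟨p⟩ := h
  calc dist a b ≤ p.bypass.length * ε := dist_le_length_mul p.bypass
    _ ≤ Nat.card K * ε := by
      rw [Nat.card_eq_fintype_card]
      gcongr
      exact p.bypass_isPath.length_lt.le

def clusterRep (ε : ℝ) (a : K) : K := ((proximityGraph K ε).connectedComponentMk a).out

lemma reachable_clusterRep (ε : ℝ) (a : K) : (proximityGraph K ε).Reachable a (clusterRep ε a) :=
  SimpleGraph.ConnectedComponent.exact (Quot.out_eq _).symm

lemma clusterRep_eq_of_dist_le (h : dist a b ≤ ε) : clusterRep ε a = clusterRep ε b := by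
  rw [clusterRep, clusterRep,
    SimpleGraph.ConnectedComponent.eq.mpr (reachable_proximityGraph_of_dist_le h)]

lemma dist_clusterRep_le [Finite K] (hε : 0 ≤ ε) (a : K) :
    dist (clusterRep ε a) a ≤ Nat.card K * ε :=
  dist_le_of_reachable hε (reachable_clusterRep ε a).symm

lemma dist_clusterRep_clusterRep_le [Finite K] {ε' : ℝ} (hε : 0 ≤ ε) (hε' : ε' ≤ ε) (a : K) :
    dist (clusterRep ε' a) (clusterRep ε a) ≤ Nat.card K * ε :=
  dist_le_of_reachable hε <|
    ((reachable_clusterRep ε' a).mono (proximityGraph_mono hε')).symm.trans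
      (reachable_clusterRep ε a)

end Proximity

section Encoding

variable {K : Type*} [MetricSpace K] {ι : Type*} (n : ℕ) (π : ι → K)

def scale (m : ℕ) : ℝ := (3 / 4) ^ m / (4 * (n + 1))

lemma scale_nonneg (m : ℕ) : 0 ≤ scale n m := by unfold scale; positivity

lemma scale_succ_le (m : ℕ) : scale n (m + 1) ≤ scale n m :=
  div_le_div_of_nonneg_right (pow_le_pow_of_le_one (by norm_num) (by norm_num) m.le_succ)
    (by positivity)

lemma card_mul_scale_le {N : ℕ} (hN : N ≤ n) (m : ℕ) : N * scale n m ≤ (3 / 4) ^ m / 4 := by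
  have hN' : (N : ℝ) ≤ n + 1 := by exact_mod_cast hN.trans n.le_succ
  calc N * scale n m ≤ (n + 1) * scale n m := by gcongr; exact scale_nonneg n m
    _ = (3 / 4) ^ m / 4 := by unfold scale; field_simp

def embedCode (a : K) : ι → ℕ → Bool :=
  fun k => greedyBits fun m => dist (clusterRep (scale n m) a) (π k)

variable {n}

lemma signedValue_embedCode [Finite K] (hcard : Nat.card K ≤ n) (hdist : ∀ a b : K, dist a b ≤ 1)
    (a : K) (k : ι) : signedValue (embedCode n π a k) = dist a (π k) := by
  refine (hasSum_signedTerm_greedyBits ?_ (fun m => ?_) ?_).tsum_eq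
  · rw [abs_of_nonneg dist_nonneg]
    linarith [hdist (clusterRep (scale n 0) a) (π k)]
  · calc _ ≤ dist (clusterRep (scale n (m + 1)) a) (clusterRep (scale n m) a) := abs_dist_sub_le ..
      _ ≤ Nat.card K * scale n m :=
        dist_clusterRep_clusterRep_le (scale_nonneg n m) (scale_succ_le n m) a
      _ ≤ (3 / 4) ^ m / 4 := card_mul_scale_le n hcard m
  · rw [tendsto_iff_dist_tendsto_zero]
    refine squeeze_zero (fun _ => dist_nonneg) (fun m =>
      (abs_dist_sub_le _ _ _).trans ((dist_clusterRep_le (scale_nonneg n m) a).trans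
        (card_mul_scale_le n hcard m))) ?_
    simpa using (tendsto_pow_atTop_nhds_zero_of_lt_one (by norm_num : (0 : ℝ) ≤ 3 / 4)
      (by norm_num)).div_const 4

lemma abs_cantorCode_embedCode_sub_le (a b : K) (k : ι) :
    |cantorCode (embedCode n π a k) - cantorCode (embedCode n π b k)| / (4 * (n + 1)) ≤
      dist a b := by
  classical
  obtain rfl | hab := eq_or_ne a b
  · simp
  have hex : ∃ m, scale n m < dist a b := by
    obtain ⟨m, hm⟩ := exists_pow_lt_of_lt_one (mul_pos (dist_pos.mpr hab)
      (by positivity : (0 : ℝ) < 4 * (n + 1))) (by norm_num : (3 / 4 : ℝ) < 1)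
    exact ⟨m, (div_lt_iff₀ (by positivity)).mpr hm⟩
  set m := Nat.find hex
  have hclose : ∀ i < m, dist a b ≤ scale n i := fun i hi => not_lt.mp (Nat.find_min hex hi)
  have hagree : ∀ i < m, embedCode n π a k i = embedCode n π b k i :=
    greedyBits_eq_of_eqOn fun i hi => by rw [clusterRep_eq_of_dist_le (hclose i hi)]
  calc _ ≤ (1 / 3 : ℝ) ^ m / (4 * (n + 1)) := by gcongr; exact abs_cantorCode_sub_le hagree
    _ ≤ scale n m :=
      div_le_div_of_nonneg_right (pow_le_pow_left₀ (by norm_num) (by norm_num) m) (by positivity)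
    _ ≤ dist a b := (Nat.find_spec hex).le

end Encoding

lemma isometry_fun_dist_of_surjective {K ι : Type*} [PseudoMetricSpace K] [Fintype ι] {π : ι → K}
    (hπ : Surjective π) : Isometry fun (a : K) (k : ι) => dist a (π k) := by
  refine Isometry.of_dist_eq fun a b => le_antisymm
    ((dist_pi_le_iff dist_nonneg).mpr fun k => abs_dist_sub_le a b (π k)) ?_
  obtain ⟨k, rfl⟩ := hπ b
  simpa using dist_le_pi_dist (fun j => dist a (π j)) (fun j => dist (π k) (π j)) k

section UniversalMap

variable {ι : Type*} (n : ℕ)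

def universalMap (x : ι → ℕ → Bool) : (ι → ℝ) × (ι → ℝ) :=
  (fun k => signedValue (x k), fun k => cantorCode (x k) / (4 * (n + 1)))

lemma continuous_universalMap : Continuous (universalMap (ι := ι) n) :=
  (continuous_pi fun k => continuous_signedValue.comp (continuous_apply k)).prodMk
    (continuous_pi fun k => (continuous_cantorCode.comp (continuous_apply k)).div_const _)

lemma universalMap_injective : Injective (universalMap (ι := ι) n) := fun x y h => funext fun k =>
  cantorCode_injective <| (div_left_inj' (by positivity)).mp (congrFun (congrArg Prod.snd h) k)

lemma dist_universalMap_embedCode [Fintype ι] {K : Type*} [MetricSpace K] [Finite K] {π : ι → K}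
    (hπ : Surjective π) (hcard : Nat.card K ≤ n) (hdist : ∀ a b : K, dist a b ≤ 1) (a b : K) :
    dist (universalMap n (embedCode n π a)) (universalMap n (embedCode n π b)) = dist a b := by
  have hfst : dist (universalMap n (embedCode n π a)).1 (universalMap n (embedCode n π b)).1 =
      dist a b := by
    simp only [universalMap, signedValue_embedCode π hcard hdist]
    exact (isometry_fun_dist_of_surjective hπ).dist_eq a b
  have hsnd : dist (universalMap n (embedCode n π a)).2 (universalMap n (embedCode n π b)).2 ≤
      dist a b := by
    refine (dist_pi_le_iff dist_nonneg).mpr fun k => ?_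
    rw [Real.dist_eq]
    dsimp only [universalMap]
    rw [← sub_div, abs_div, abs_of_pos (by positivity : (0 : ℝ) < 4 * (n + 1))]
    exact abs_cantorCode_embedCode_sub_le π a b k
  rw [Prod.dist_eq, hfst, max_eq_left hsnd]

end UniversalMap

def finPiCantorHomeomorph (N : ℕ) [NeZero N] : (Fin N → ℕ → Bool) ≃ₜ (ℕ → Bool) :=
  Homeomorph.piCurry.symm.trans
    (Homeomorph.piCongrLeft (Y := fun _ => Bool)
      ((Equiv.prodComm _ _).trans (Nat.divModEquiv N).symm))

end CantorUniversal

end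

open CantorUniversal in
/-- For each natural number `n`, there exists a metric space `C` homeomorphic to the
Cantor space `ℕ → Bool` such that every metric space with at most `n` points and
diameter at most `1` admits an isometric embedding into `C`. -/
theorem cantor_isometrically_universal_for_small_spaces (n : ℕ) :
    ∃ (C : Type) (_ : MetricSpace C),
      Nonempty (C ≃ₜ (ℕ → Bool)) ∧
      ∀ (K : Type) (_ : MetricSpace K),
        Finite K → Nat.card K ≤ n → Metric.diam (Set.univ : Set K) ≤ 1 →
          ∃ i : K → C, Isometry i := by
  have hembed := (continuous_universalMap (ι := Fin (n + 1)) n).isClosedEmbedding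
    (universalMap_injective n)
  refine ⟨Set.range (universalMap (ι := Fin (n + 1)) n), inferInstance,
    ⟨hembed.isEmbedding.toHomeomorph.symm.trans (finPiCantorHomeomorph (n + 1))⟩, ?_⟩
  intro K _ _ hcard hdiam
  rcases isEmpty_or_nonempty K with hK | hK
  · exact ⟨isEmptyElim, isometry_subsingleton⟩
  obtain ⟨π, hπ⟩ : ∃ π : Fin (n + 1) → K, Surjective π :=
    ⟨invFun (Fin.castLE (by omega) ∘ Finite.equivFin K),
      invFun_surjective ((Fin.castLE_injective _).comp (Finite.equivFin K).injective)⟩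
  have hdist (a b : K) : dist a b ≤ 1 :=
    (Metric.dist_le_diam_of_mem Set.finite_univ.isBounded trivial trivial).trans hdiam
  exact ⟨fun a => ⟨_, Set.mem_range_self (embedCode n π a)⟩,
    Isometry.of_dist_eq (dist_universalMap_embedCode n hπ hcard hdist)⟩
end

section
/- Let Q = [0,1]^ℕ be the Hilbert cube with its product (metrizable compact) topology, let 𝒦(Q) denote the hyperspace of nonempty compact subsets of Q with the Hausdorff metric, let C(Q, Q) be the space of continuous self-maps of Q with the compact-open topology, and let ℕ^ℕ be the Baire space. Suppose 𝓔 ⊆ 𝒦(Q) is closed and upward-closed (if K ∈ 𝓔 and K ⊆ L with L ∈ 𝒦(Q), then L ∈ 𝓔), and Φ : ℕ^ℕ → 𝒦(Q) is continuous. Then the set { (s, f, y) ∈ ℕ^ℕ × C(Q, Q) × Q : there exists K ∈ 𝓔 with K ⊆ f⁻¹({y}) ∩ Φ(s) } is closed in the product ℕ^ℕ × C(Q, Q) × Q. -/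
open TopologicalSpace

/-- The Hilbert cube `Q = [0,1]^ℕ` with a metric inducing the product topology. -/
noncomputable instance : MetricSpace (ℕ → unitInterval) := PiCountable.metricSpace

open Metric Filter Topology in
/-- Let `Q` be the Hilbert cube, `𝒦(Q)` the hyperspace of nonempty compact subsets of `Q`
with the Hausdorff metric, `C(Q,Q)` the space of continuous self-maps of `Q` with the
compact-open topology, and `ℕ^ℕ` the Baire space. If `E ⊆ 𝒦(Q)` is closed and
upward-closed and `Φ : ℕ^ℕ → 𝒦(Q)` is continuous, then the set of triples `(s, f, y)`
such that some `K ∈ E` satisfies `K ⊆ f⁻¹({y}) ∩ Φ(s)` is closed. -/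
theorem isClosed_fiber_condition
    (E : Set (NonemptyCompacts (ℕ → unitInterval)))
    (hE : IsClosed E)
    (hup : ∀ K ∈ E, ∀ L : NonemptyCompacts (ℕ → unitInterval),
      (K : Set (ℕ → unitInterval)) ⊆ (L : Set (ℕ → unitInterval)) → L ∈ E)
    (Φ : (ℕ → ℕ) → NonemptyCompacts (ℕ → unitInterval)) (hΦ : Continuous Φ) :
    IsClosed {p : (ℕ → ℕ) × C(ℕ → unitInterval, ℕ → unitInterval) × (ℕ → unitInterval) |
      ∃ K ∈ E, (K : Set (ℕ → unitInterval)) ⊆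
        ⇑p.2.1 ⁻¹' {p.2.2} ∩ (Φ p.1 : Set (ℕ → unitInterval))} := by
  set Q := ℕ → unitInterval
  -- edist between nonempty compact sets is finite
  have hfin : ∀ A B : NonemptyCompacts Q,
      EMetric.hausdorffEdist (A : Set Q) (B : Set Q) ≠ ⊤ := fun A B =>
    hausdorffEdist_ne_top_of_nonempty_of_bounded A.nonempty B.nonempty
      A.isCompact.isBounded B.isCompact.isBounded
  apply IsSeqClosed.isClosed
  intro p q hp hq
  choose K hKE hKsub using hp
  -- extract a convergent subsequence of the compacta K n
  obtain ⟨L, -, φ, hφ, hL⟩ := isCompact_univ.tendsto_subseq (x := K) (fun n => Set.mem_univ _)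
  have hLE : L ∈ E := hE.mem_of_tendsto hL (Filter.Eventually.of_forall fun n => hKE _)
  refine ⟨L, hLE, fun x hx => ?_⟩
  have hq' : Tendsto (fun n => p (φ n)) atTop (𝓝 q) := hq.comp hφ.tendsto_atTop
  have hq1 : Tendsto (fun n => (p (φ n)).1) atTop (𝓝 q.1) :=
    ((continuous_fst.tendsto q).comp hq')
  have hq21 : Tendsto (fun n => (p (φ n)).2.1) atTop (𝓝 q.2.1) :=
    ((continuous_fst.comp continuous_snd).tendsto q).comp hq'
  have hq22 : Tendsto (fun n => (p (φ n)).2.2) atTop (𝓝 q.2.2) :=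
    ((continuous_snd.comp continuous_snd).tendsto q).comp hq'
  -- dist (K (φ n)) L → 0
  have hdist : Tendsto (fun n => dist (K (φ n)) L) atTop (𝓝 0) := by
    simpa using (tendsto_iff_dist_tendsto_zero.1 hL)
  -- choose points z n ∈ K (φ n) closest to x
  have hz0 : ∀ n, ∃ z ∈ K (φ n), infDist x (K (φ n) : Set Q) = dist x z := fun n =>
    (K (φ n)).isCompact.exists_infDist_eq_dist (K (φ n)).nonempty x
  choose z hzmem hzd using hz0
  have hzx : Tendsto z atTop (𝓝 x) := by
    apply tendsto_iff_dist_tendsto_zero.2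
    have hle : ∀ n, dist (z n) x ≤ dist (K (φ n)) L := by
      intro n
      rw [dist_comm, ← hzd n, NonemptyCompacts.dist_eq]
      exact infDist_le_hausdorffDist_of_mem hx (hfin L (K (φ n)))
        |>.trans_eq (by rw [hausdorffDist_comm])
    exact squeeze_zero (fun n => dist_nonneg) hle hdist
  have hzK : ∀ n, z n ∈ (⇑(p (φ n)).2.1 ⁻¹' {(p (φ n)).2.2} ∩ (Φ (p (φ n)).1 : Set Q)) :=
    fun n => hKsub (φ n) (hzmem n)
  constructor
  · -- x is in the fiber: f x = y
    have h1 : Tendsto (fun n => (p (φ n)).2.1 (z n)) atTop (𝓝 (q.2.1 x)) := by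
      have : Tendsto (fun n => ((p (φ n)).2.1, z n)) atTop (𝓝 (q.2.1, x)) :=
        hq21.prodMk_nhds hzx
      exact (continuous_eval.tendsto (q.2.1, x)).comp this
    have h2 : Tendsto (fun n => (p (φ n)).2.1 (z n)) atTop (𝓝 q.2.2) := by
      have : (fun n => (p (φ n)).2.1 (z n)) = fun n => (p (φ n)).2.2 := by
        funext n
        exact (hzK n).1
      rw [this]; exact hq22
    exact tendsto_nhds_unique h1 h2
  · -- x ∈ Φ q.1
    have hΦt : Tendsto (fun n => Φ (p (φ n)).1) atTop (𝓝 (Φ q.1)) :=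
      (hΦ.tendsto q.1).comp hq1
    have hΦd : Tendsto (fun n => dist (Φ (p (φ n)).1) (Φ q.1)) atTop (𝓝 0) := by
      simpa using tendsto_iff_dist_tendsto_zero.1 hΦt
    have hinf : Tendsto (fun n => infDist (z n) (Φ q.1 : Set Q)) atTop
        (𝓝 (infDist x (Φ q.1 : Set Q))) :=
      ((continuous_infDist_pt (Φ q.1 : Set Q)).tendsto x).comp hzx
    have hle : ∀ n, infDist (z n) (Φ q.1 : Set Q) ≤ dist (Φ (p (φ n)).1) (Φ q.1) := by
      intro n
      rw [NonemptyCompacts.dist_eq]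
      exact infDist_le_hausdorffDist_of_mem (hzK n).2 (hfin _ _)
    have : infDist x (Φ q.1 : Set Q) = 0 :=
      le_antisymm (le_of_tendsto_of_tendsto' hinf hΦd hle) infDist_nonneg
    exact ((Φ q.1).isCompact.isClosed.mem_iff_infDist_zero (Φ q.1).nonempty).2 this
end

section
/- Let Q = [0,1]^ℕ be the Hilbert cube, 𝒦(Q) the hyperspace of nonempty compact subsets of Q with the Hausdorff metric, C(Q, Q) the space of continuous self-maps of Q with the compact-open topology, and ℕ^ℕ the Baire space. Suppose (𝓔_m)_{m∈ℕ} is a sequence of subsets of 𝒦(Q), each closed and upward-closed, and Φ : ℕ^ℕ → 𝒦(Q) is continuous. Then the set { (s, f) ∈ ℕ^ℕ × C(Q, Q) : for every y ∈ Q and every m ∈ ℕ, there is no K ∈ 𝓔_m with K ⊆ f⁻¹({y}) ∩ Φ(s) } is a Gδ set (a countable intersection of open sets) in ℕ^ℕ × C(Q, Q). -/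
open TopologicalSpace

/-!
The complement of the set is the union over `m` of the sets of pairs `(s, f)` for which some
`K ∈ E m` lies in `Φ s` and has `f '' K` a singleton. For the Vietoris topology of `𝒦(Q)`,
"`f '' K` is a singleton" and "`K ⊆ L`" are closed conditions, so each of these sets is the
projection of a closed subset of `(ℕ^ℕ × C(Q, Q)) × 𝒦(Q)`; the projection is closed because
`𝒦(Q)` is compact.
-/

open Set

namespace TopologicalSpace.NonemptyCompacts

variable {X Y : Type*} [TopologicalSpace X] [TopologicalSpace Y]

theorem map_eq_singleton_iff {f : X → Y} (hf : Continuous f) (K : NonemptyCompacts X) (y : Y) :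
    K.map f hf = {y} ↔ (K : Set X) ⊆ f ⁻¹' {y} := by
  rw [← SetLike.coe_set_eq, coe_map, coe_singleton, ← image_subset_iff,
    (K.nonempty.image f).subset_singleton_iff]

theorem isClosed_setOf_coe_subset_coe [T2Space X] :
    IsClosed {p : NonemptyCompacts X × NonemptyCompacts X | (p.1 : Set X) ⊆ p.2} := by
  simp_rw [SetLike.coe_subset_coe, ← sup_eq_right]
  exact isClosed_eq continuous_sup continuous_snd

end TopologicalSpace.NonemptyCompacts

open TopologicalSpace.NonemptyCompacts in
theorem isClosed_setOf_exists_subset_preimage_singleton_inter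
    {P X Y : Type*} [TopologicalSpace P] [TopologicalSpace X] [CompactSpace X] [T2Space X]
    [TopologicalSpace Y] [T2Space Y] {E : Set (NonemptyCompacts X)} (hE : IsClosed E)
    {g : P → X → Y} (hg : Continuous (Function.uncurry g))
    {Φ : P → NonemptyCompacts X} (hΦ : Continuous Φ) :
    IsClosed {p | ∃ y, ∃ K ∈ E, (K : Set X) ⊆ g p ⁻¹' {y} ∩ Φ p} := by
  have hgp (p : P) : Continuous (g p) := hg.comp (Continuous.prodMk_right p)
  let S : Set (P × NonemptyCompacts X) :=
    {q | q.2 ∈ E ∧ q.2.map (g q.1) (hgp q.1) ∈ range ({·}) ∧ (q.2 : Set X) ⊆ Φ q.1}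
  have hS : IsClosed S := by
    refine (hE.preimage continuous_snd).inter (IsClosed.inter ?_ ?_)
    · exact isClosedEmbedding_singleton.isClosed_range.preimage
        (continuous_snd.nonemptyCompacts_map' (g := fun q : P × NonemptyCompacts X => g q.1)
          (hg.comp (continuous_fst.fst.prodMk continuous_snd)))
    · exact isClosed_setOf_coe_subset_coe.preimage
        (continuous_snd.prodMk (hΦ.comp continuous_fst))
  convert isClosedMap_fst_of_compactSpace S hS using 1
  ext p
  simp only [S, mem_ofPred_eq, mem_image, Prod.exists, exists_and_right, exists_eq_right,
    mem_range, eq_comm (b := NonemptyCompacts.map _ _ _), map_eq_singleton_iff, subset_inter_iff]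
  tauto

theorem isGδ_small_fibers_general
    (E : ℕ → Set (NonemptyCompacts (ℕ → unitInterval)))
    (hE : ∀ m, IsClosed (E m))
    (Φ : (ℕ → ℕ) → NonemptyCompacts (ℕ → unitInterval)) (hΦ : Continuous Φ) :
    IsGδ {p : (ℕ → ℕ) × C(ℕ → unitInterval, ℕ → unitInterval) |
      ∀ (y : ℕ → unitInterval) (m : ℕ),
        ¬ ∃ K ∈ E m, (K : Set (ℕ → unitInterval)) ⊆
          ⇑p.2 ⁻¹' {y} ∩ (Φ p.1 : Set (ℕ → unitInterval))} := by
  have hbad (m : ℕ) := isClosed_setOf_exists_subset_preimage_singleton_inter (hE m)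
    (g := fun p : (ℕ → ℕ) × C(ℕ → unitInterval, ℕ → unitInterval) => ⇑p.2)
    (continuous_eval.comp (continuous_fst.snd.prodMk continuous_snd)) (hΦ.comp continuous_fst)
  convert IsGδ.iInter fun m => (hbad m).isOpen_compl.isGδ using 1
  ext p
  simp only [mem_ofPred_eq, mem_iInter, mem_compl_iff, not_exists]
  exact forall_comm

/-- Let `Q` be the Hilbert cube, `𝒦(Q)` the hyperspace of nonempty compact subsets of `Q`
with the Hausdorff metric, `C(Q,Q)` the space of continuous self-maps of `Q` with the
compact-open topology, and `ℕ^ℕ` the Baire space. If each `E m ⊆ 𝒦(Q)` is closed and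
upward-closed and `Φ : ℕ^ℕ → 𝒦(Q)` is continuous, then the set of pairs `(s, f)` such
that for every `y ∈ Q` and `m` no `K ∈ E m` satisfies `K ⊆ f⁻¹({y}) ∩ Φ(s)` is Gδ. -/
theorem isGδ_small_fibers
    (E : ℕ → Set (NonemptyCompacts (ℕ → unitInterval)))
    (hE : ∀ m, IsClosed (E m))
    (hup : ∀ m, ∀ K ∈ E m, ∀ L : NonemptyCompacts (ℕ → unitInterval),
      (K : Set (ℕ → unitInterval)) ⊆ (L : Set (ℕ → unitInterval)) → L ∈ E m)
    (Φ : (ℕ → ℕ) → NonemptyCompacts (ℕ → unitInterval)) (hΦ : Continuous Φ) :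
    IsGδ {p : (ℕ → ℕ) × C(ℕ → unitInterval, ℕ → unitInterval) |
      ∀ (y : ℕ → unitInterval) (m : ℕ),
        ¬ ∃ K ∈ E m, (K : Set (ℕ → unitInterval)) ⊆
          ⇑p.2 ⁻¹' {y} ∩ (Φ p.1 : Set (ℕ → unitInterval))} :=
  isGδ_small_fibers_general E hE Φ hΦ
end

section
/- There exist nonempty complete separable metric spaces X and Y and a continuous surjection F : X → Y which is isometrically containing for the class of all continuous surjections between nonempty compact metric spaces; that is, for every pair of nonempty compact metric spaces K, L and every continuous surjection g : K → L, there exist isometric embeddings i : K → X and j : L → Y such that F ∘ i = j ∘ g. -/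
/-!
Put `Y = C(2^ℕ, ℝ)`, `P = ℕ → EReal` (a compact metrizable cube), `X = C(P, Y) × Y` and
`F (G, φ) = G (ρ φ)`, where `ρ : Y → P` samples `φ` along a dense sequence and is a continuous
injection. By the Hausdorff–Alexandroff theorem every nonempty compact metric space `K` is a
continuous image `π : 2^ℕ → K`, and `k ↦ dist k (π ·)` embeds `K` isometrically in `Y`. Given
`g : K → L`, the map `ρ ∘ ι_K` is a closed embedding of `K` into `P`, so by Tietze (applied to the
uncurried map on `P × 2^ℕ`) the map `ι_L ∘ g` factors as `G ∘ ρ ∘ ι_K`; then `k ↦ (G, ι_K k)` is an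
isometry because its first coordinate is constant.
-/

open TopologicalSpace Topology

universe u v

namespace ContinuousMap

section DistAlong

variable {S K : Type*} [TopologicalSpace S] [CompactSpace S] [PseudoMetricSpace K]

def distAlong (π : C(S, K)) (k : K) : C(S, ℝ) := ⟨fun s => dist k (π s), by fun_prop⟩

theorem isometry_distAlong {π : C(S, K)} (hπ : Function.Surjective π) :
    Isometry (distAlong π) := by
  refine Isometry.of_dist_eq fun k k' => le_antisymm ?_ ?_
  · exact (dist_le dist_nonneg).2 fun s => abs_dist_sub_le k k' (π s)
  · obtain ⟨s, rfl⟩ := hπ k'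
    simpa [distAlong, Real.dist_eq] using
      dist_apply_le_dist (f := distAlong π k) (g := distAlong π (π s)) s

end DistAlong

section EvalDenseSeq

variable (S : Type*) [TopologicalSpace S] [SeparableSpace S] [Nonempty S]

/-- Values in `EReal` rather than `ℝ` make the target `ℕ → EReal` compact. -/
noncomputable def evalDenseSeq (φ : C(S, ℝ)) (n : ℕ) : EReal := φ (denseSeq S n)

theorem continuous_evalDenseSeq : Continuous (evalDenseSeq S) :=
  continuous_pi fun _ => continuous_coe_real_ereal.comp (continuous_eval_const _)

theorem injective_evalDenseSeq : Function.Injective (evalDenseSeq S) := fun φ ψ h =>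
  coe_injective <| (denseRange_denseSeq S).equalizer φ.continuous ψ.continuous <|
    funext fun n => EReal.coe_injective (congrFun h n)

end EvalDenseSeq

theorem exists_extension_into_continuousMap {X₁ X S : Type u} {Z : Type v}
    [TopologicalSpace X₁] [TopologicalSpace X] [TopologicalSpace S] [TopologicalSpace Z]
    [LocallyCompactSpace S] [NormalSpace (X × S)] [TietzeExtension.{u, v} Z]
    {e : X₁ → X} (he : IsClosedEmbedding e) (f : C(X₁, C(S, Z))) :
    ∃ G : C(X, C(S, Z)), G ∘ e = f := by
  obtain ⟨g, hg⟩ := f.uncurry.exists_extension' (he.prodMap IsClosedEmbedding.id)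
  exact ⟨g.curry, funext fun x => ext fun s => congrFun hg (x, s)⟩

end ContinuousMap

theorem exists_isometry_continuousMap_nat_bool (K : Type*) [MetricSpace K] [CompactSpace K]
    [Nonempty K] : ∃ ι : K → C(ℕ → Bool, ℝ), Isometry ι := by
  obtain ⟨π, hπ, hπ_surj⟩ := exists_nat_bool_continuous_surjective_of_compact K
  exact ⟨ContinuousMap.distAlong ⟨π, hπ⟩, ContinuousMap.isometry_distAlong hπ_surj⟩

theorem Isometry.const_prodMk {α β γ : Type*} [PseudoEMetricSpace α] [PseudoEMetricSpace β]
    [PseudoEMetricSpace γ] (b : β) {f : α → γ} (hf : Isometry f) :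
    Isometry fun a => (b, f a) := fun x y => by
  simp [Prod.edist_eq, hf x y]

open ContinuousMap in
/-- There exist nonempty complete separable metric spaces `X`, `Y` and a continuous
surjection `F : X → Y` which is isometrically containing for the class of all continuous
surjections between nonempty compact metric spaces. -/
theorem exists_isometrically_containing_for_compacta :
    ∃ (X Y : Type) (_ : MetricSpace X) (_ : MetricSpace Y) (F : X → Y),
      Nonempty X ∧ Nonempty Y ∧
      CompleteSpace X ∧ CompleteSpace Y ∧
      TopologicalSpace.SeparableSpace X ∧ TopologicalSpace.SeparableSpace Y ∧
      Continuous F ∧ Function.Surjective F ∧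
      ∀ (K L : Type) (_ : MetricSpace K) (_ : MetricSpace L),
        Nonempty K → CompactSpace K → Nonempty L → CompactSpace L →
        ∀ g : K → L, Continuous g → Function.Surjective g →
          ∃ (i : K → X) (j : L → Y), Isometry i ∧ Isometry j ∧ F ∘ i = j ∘ g := by
  let ρ := evalDenseSeq (ℕ → Bool)
  refine ⟨C(ℕ → EReal, C(ℕ → Bool, ℝ)) × C(ℕ → Bool, ℝ), C(ℕ → Bool, ℝ), inferInstance,
    inferInstance, fun x => x.1 (ρ x.2), inferInstance, inferInstance, inferInstance,
    inferInstance, inferInstance, inferInstance, ?_, fun y => ⟨(const _ y, y), rfl⟩, ?_⟩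
  · exact continuous_eval.comp
      (continuous_fst.prodMk ((continuous_evalDenseSeq _).comp continuous_snd))
  · intro K L _ _ _ _ _ _ g hg _
    obtain ⟨ι, hι⟩ := exists_isometry_continuousMap_nat_bool K
    obtain ⟨j, hj⟩ := exists_isometry_continuousMap_nat_bool L
    have he : IsClosedEmbedding (ρ ∘ ι) :=
      ((continuous_evalDenseSeq _).comp hι.continuous).isClosedEmbedding
        ((injective_evalDenseSeq _).comp hι.injective)
    obtain ⟨G, hG⟩ := exists_extension_into_continuousMap he ⟨j ∘ g, hj.continuous.comp hg⟩
    exact ⟨fun k => (G, ι k), j, hι.const_prodMk G, hj, hG⟩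
end

section
/- Let E be a nonempty compact totally disconnected (zero-dimensional) metric space. Then there exists a metric space X homeomorphic to the Cantor space {0,1}^ℕ, an isometric embedding e : E → X, and a continuous map r : X → E with r ∘ e = id_E (i.e., X retracts continuously onto the isometric copy of E). -/
universe u

open Set Function Topology TopologicalSpace

/-! A countable clopen basis embeds `E` into the Cantor space `C` as a closed set `S`, and a
retraction of `C` onto `S` yields a continuous `p : C → E` inverting the embedding. Choose
`F : C → ℝ` with zero set `S` and an injection `ι : C → ℝ`. Then `y ↦ (p y, F y, F y * ι y)`
is a continuous injection of `C` into `E × ℝ × ℝ` (off `S`, the factor `F y ≠ 0` lets `ι`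
separate points), so its image is a copy of `C`; it contains `E × {(0, 0)}` isometrically,
and the first projection retracts it onto that copy. -/

theorem exists_continuous_injective_natBool_of_isTopologicalBasis_isClopen {E : Type*}
    [TopologicalSpace E] [T0Space E] [SecondCountableTopology E]
    (hE : IsTopologicalBasis {s : Set E | IsClopen s}) :
    ∃ g : E → ℕ → Bool, Continuous g ∧ Injective g := by
  obtain ⟨b, hb_clopen, hb_count, hb⟩ := hE.exists_countable
  -- `∅` is added only to make the enumerated family nonempty
  obtain ⟨f, hf⟩ := (hb_count.insert ∅).exists_eq_range (insert_nonempty _ _)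
  have hf_clopen (n : ℕ) : IsClopen (f n) := by
    rcases (hf ▸ mem_range_self n : f n ∈ insert ∅ b) with h | h
    · exact h ▸ isClopen_empty
    · exact hb_clopen h
  refine ⟨fun x n => (f n).boolIndicator x,
    continuous_pi fun n => (continuous_boolIndicator_iff_isClopen _).2 (hf_clopen n),
    fun x y hxy => (hb.inseparable_iff.2 fun s hs => ?_).eq⟩
  obtain ⟨n, rfl⟩ : s ∈ range f := hf ▸ mem_insert_of_mem _ hs
  simpa [Set.boolIndicator] using congrFun hxy n

theorem PiNat.exists_continuous_leftInverse_of_isClosedEmbedding {E : ℕ → Type*}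
    [∀ n, TopologicalSpace (E n)] [∀ n, DiscreteTopology (E n)] {Z : Type*} [TopologicalSpace Z]
    [Nonempty Z] {g : Z → ∀ n, E n} (hg : IsClosedEmbedding g) :
    ∃ p : (∀ n, E n) → Z, Continuous p ∧ LeftInverse p g := by
  obtain ⟨ret, hret, -, hret_cont⟩ :=
    PiNat.exists_retraction_subtype_of_isClosed hg.isClosed_range (range_nonempty g)
  let φ : Z ≃ₜ range g := hg.isEmbedding.toHomeomorph
  exact ⟨φ.symm ∘ ret, φ.symm.continuous.comp hret_cont,
    fun z => (congrArg φ.symm (hret (φ z))).trans (φ.symm_apply_apply z)⟩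

theorem exists_homeomorph_isometry_retraction {Y : Type*} [TopologicalSpace Y] [CompactSpace Y]
    {E : Type u} [MetricSpace E] {g : E → Y} {p : Y → E} (hp : Continuous p)
    (hpg : LeftInverse p g) {F : Y → ℝ} (hF : Continuous F) (hFg : F ⁻¹' {0} = range g)
    {ι : Y → ℝ} (hι : Continuous ι) (hι_inj : Injective ι) :
    ∃ (X : Type u) (_ : MetricSpace X) (e : E → X) (r : X → E),
      Nonempty (X ≃ₜ Y) ∧ Isometry e ∧ Continuous r ∧ r ∘ e = id := by
  let Φ : Y → E × ℝ × ℝ := fun y => (p y, F y, F y * ι y)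
  have hΦ_inj : Injective Φ := by
    intro x y hxy
    simp only [Φ, Prod.mk.injEq] at hxy
    obtain ⟨hp_eq, hF_eq, hFι_eq⟩ := hxy
    by_cases hx : F x = 0
    · obtain ⟨a, rfl⟩ : x ∈ range g := hFg ▸ hx
      obtain ⟨b, rfl⟩ : y ∈ range g := hFg ▸ (hF_eq ▸ hx : F y = 0)
      rw [hpg a, hpg b] at hp_eq
      rw [hp_eq]
    · exact hι_inj (mul_left_cancel₀ hx (hF_eq ▸ hFι_eq))
  have hΦ : IsClosedEmbedding Φ := (by fun_prop : Continuous Φ).isClosedEmbedding hΦ_inj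
  have he (a : E) : (a, (0 : ℝ), (0 : ℝ)) ∈ range Φ := by
    have hFa : F (g a) = 0 := hFg.ge (mem_range_self a)
    exact ⟨g a, by simp [Φ, hpg a, hFa]⟩
  refine ⟨range Φ, inferInstance, fun a => ⟨_, he a⟩, fun x => x.1.1,
    ⟨hΦ.isEmbedding.toHomeomorph.symm⟩, Isometry.of_dist_eq fun a b => ?_, by fun_prop, rfl⟩
  simp [Subtype.dist_eq, Prod.dist_eq]

/-- Every nonempty compact totally disconnected metric space `E` embeds isometrically
into a metric space `X` homeomorphic to the Cantor space `ℕ → Bool`, in such a way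
that `X` retracts continuously onto the isometric copy of `E`. -/
theorem exists_cantor_isometric_embedding_with_retraction
    (E : Type u) [MetricSpace E] [Nonempty E] [CompactSpace E]
    [TotallyDisconnectedSpace E] :
    ∃ (X : Type u) (_ : MetricSpace X) (e : E → X) (r : X → E),
      Nonempty (X ≃ₜ (ℕ → Bool)) ∧ Isometry e ∧ Continuous r ∧ r ∘ e = id := by
  obtain ⟨g, hg, hg_inj⟩ :=
    exists_continuous_injective_natBool_of_isTopologicalBasis_isClopen
      (isTopologicalBasis_isClopen (X := E))
  have hg_emb : IsClosedEmbedding g := hg.isClosedEmbedding hg_inj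
  obtain ⟨p, hp, hpg⟩ := PiNat.exists_continuous_leftInverse_of_isClosedEmbedding hg_emb
  obtain ⟨F, hFg, -⟩ :=
    perfectlyNormalSpace_iff_forall_isClosed_preimage_zero.1 inferInstance _ hg_emb.isClosed_range
  exact exists_homeomorph_isometry_retraction hp hpg F.continuous hFg.symm
    (continuous_subtype_val.comp cantorSetHomeomorphNatToBool.symm.continuous)
    (Subtype.val_injective.comp cantorSetHomeomorphNatToBool.symm.injective)
end
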